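/- Let (E, ℛ, τ) satisfy conditions (i), (ii), (iii). Let g ∈ Γ, e ∈ E×, and let 𝒮 ⊆ ℛ(e) be nonempty finite. If the induced action of g on ℤ[E×] fixes e(𝒮), i.e. τ_g(e(𝒮)) = e(𝒮), then τ_g(e) = e. -/

import Mathlib

set_option linter.unusedSectionVars false

/-- A *semilattice with zero*: a commutative idempotent semigroup with an
absorbing element `0`. -/
class SemilatticeWithZero (E : Type) extends CommSemigroup E, Zero E where
  mul_idem : ∀ e : E, e * e = e
  zero_mul : ∀ e : E, 0 * e = 0

namespace IndRes

variable {E : Type} [SemilatticeWithZero E]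

/-- `single e c`, viewed in the semigroup algebra `ℤ[E]`. -/
noncomputable def sgl (e : E) (c : ℤ) : MonoidAlgebra ℤ E := MonoidAlgebra.ofCoeff (Finsupp.single e c)

/-- Truncation map deleting the coefficient at `0`. -/
noncomputable def T (x : MonoidAlgebra ℤ E) : MonoidAlgebra ℤ E := x - sgl 0 (x.coeff 0)

lemma sgl_apply_self (e : E) (c : ℤ) : (sgl e c).coeff e = c := Finsupp.single_eq_same

lemma sgl_apply_ne (e d : E) (c : ℤ) (h : e ≠ d) : (sgl e c).coeff d = 0 := Finsupp.single_eq_of_ne (Ne.symm h)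

lemma sgl_add (e : E) (c d : ℤ) : sgl e (c + d) = sgl e c + sgl e d :=
  congrArg MonoidAlgebra.ofCoeff (Finsupp.single_add e c d)

lemma sgl_sub (e : E) (c d : ℤ) : sgl e (c - d) = sgl e c - sgl e d :=
  congrArg MonoidAlgebra.ofCoeff (Finsupp.single_sub e c d)

lemma T_apply_zero (x : MonoidAlgebra ℤ E) : (T x).coeff 0 = 0 := by
  show ((x - sgl 0 (x.coeff 0) : MonoidAlgebra ℤ E)).coeff 0 = 0
  rw [MonoidAlgebra.coeff_sub, Finsupp.sub_apply, sgl_apply_self, sub_self]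

/-- `ℤ[E^×]`, realized as the additive subgroup of the semigroup algebra
`ℤ[E]` consisting of the elements whose coefficient at `0` vanishes; it is the free
`ℤ`-module with basis `E^× = E \ {0}`. -/
noncomputable def ZS (E : Type) [SemilatticeWithZero E] : AddSubgroup (MonoidAlgebra ℤ E) where
  carrier := {x | x.coeff 0 = 0}
  zero_mem' := rfl
  add_mem' := by
    intro a b ha hb
    simp only [Set.mem_setOf_eq] at *
    rw [MonoidAlgebra.coeff_add, Finsupp.add_apply, ha, hb, add_zero]
  neg_mem' := by
    intro a ha
    simp only [Set.mem_setOf_eq] at *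
    rw [MonoidAlgebra.coeff_neg, Finsupp.neg_apply, ha, neg_zero]

/-- The integral semigroup ring `ℤ[E^×]`. -/
abbrev ZE (E : Type) [SemilatticeWithZero E] : Type := ↥(ZS E)

lemma mem_ZS {x : MonoidAlgebra ℤ E} : x ∈ ZS E ↔ x.coeff 0 = 0 := Iff.rfl

lemma T_eq_self {x : MonoidAlgebra ℤ E} (h : x.coeff 0 = 0) : T x = x := by
  simp [T, h, sgl]

lemma T_add (a b : MonoidAlgebra ℤ E) : T (a + b) = T a + T b := by
  unfold T
  rw [show ((a + b).coeff 0) = a.coeff 0 + b.coeff 0 from Finsupp.add_apply a.coeff b.coeff 0, sgl_add]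
  abel

lemma T_sub_sgl (x : MonoidAlgebra ℤ E) (m : ℤ) : T (x - sgl 0 m) = T x := by
  unfold T
  have h : ((x - sgl 0 m : MonoidAlgebra ℤ E)).coeff 0 = x.coeff 0 - m := by
    rw [MonoidAlgebra.coeff_sub, Finsupp.sub_apply, sgl_apply_self]
  rw [h, sgl_sub]
  abel

lemma single_zero_mul (c : ℤ) (b : MonoidAlgebra ℤ E) :
    (sgl 0 c) * b = sgl 0 (((sgl 0 c * b : MonoidAlgebra ℤ E)).coeff 0) := by
  classical
  ext d
  by_cases hd : d = 0
  · subst hd; rw [sgl_apply_self]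
  · rw [sgl_apply_ne 0 d _ (Ne.symm hd)]
    by_contra h
    have hmem : d ∈ ((sgl (0:E) c) * b).coeff.support := Finsupp.mem_support_iff.mpr h
    have h2 := MonoidAlgebra.support_coeff_mul_subset (sgl (0:E) c) b hmem
    rw [Finset.mem_mul] at h2
    obtain ⟨a, ha, b', _, hab⟩ := h2
    have ha' : a = 0 := by
      have := Finsupp.support_single_subset (ha : a ∈ (Finsupp.single (0:E) c).support)
      simpa using this
    exact hd (by rw [← hab, ha', SemilatticeWithZero.zero_mul])

lemma T_mul_left (a b : MonoidAlgebra ℤ E) : T (T a * b) = T (a * b) := by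
  have h1 : T a * b = a * b - (sgl 0 (a.coeff 0)) * b := by rw [T, sub_mul]
  rw [h1, single_zero_mul, T_sub_sgl]

lemma T_mul_right (a b : MonoidAlgebra ℤ E) : T (a * T b) = T (a * b) := by
  rw [mul_comm a (T b), T_mul_left, mul_comm]

noncomputable instance : Mul (ZE E) :=
  ⟨fun x y => ⟨T (x.1 * y.1), T_apply_zero _⟩⟩

lemma ZE.val_mul (x y : ZE E) : (x * y).1 = T (x.1 * y.1) := rfl

noncomputable instance : NonUnitalCommRing (ZE E) :=
  { (inferInstance : AddCommGroup (ZE E)) with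
    mul := (· * ·)
    left_distrib := by
      intro x y z
      apply Subtype.ext
      show T (x.1 * (y.1 + z.1)) = T (x.1 * y.1) + T (x.1 * z.1)
      rw [mul_add, T_add]
    right_distrib := by
      intro x y z
      apply Subtype.ext
      show T ((x.1 + y.1) * z.1) = T (x.1 * z.1) + T (y.1 * z.1)
      rw [add_mul, T_add]
    zero_mul := by
      intro x
      apply Subtype.ext
      show T ((0 : MonoidAlgebra ℤ E) * x.1) = 0
      rw [zero_mul]
      simp [T, sgl]
    mul_zero := by
      intro x
      apply Subtype.ext
      show T (x.1 * (0 : MonoidAlgebra ℤ E)) = 0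
      rw [mul_zero]
      simp [T, sgl]
    mul_assoc := by
      intro x y z
      apply Subtype.ext
      show T (T (x.1 * y.1) * z.1) = T (x.1 * T (y.1 * z.1))
      rw [T_mul_left, T_mul_right, mul_assoc]
    mul_comm := by
      intro x y
      apply Subtype.ext
      show T (x.1 * y.1) = T (y.1 * x.1)
      rw [mul_comm] }

/-- The canonical image of `e ∈ E` in `ℤ[E^×]`: the basis element `e` if `e ≠ 0`,
and `0` if `e = 0`. -/
noncomputable def elt (e : E) : ZE E := ⟨T (sgl e 1), T_apply_zero _⟩

/-- Product of a (nonempty) finite family in a commutative non-unital ring, computed inside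
the unitization.  For a nonempty index set this is the iterated product. -/
noncomputable def nprod {ι A : Type} [NonUnitalCommRing A] (s : Finset ι) (f : ι → A) : A :=
  (∏ j ∈ s, (Unitization.inr (f j) : Unitization ℤ A)).snd

/-- The join `⋁_{j ∈ J} x_j = ∑_{∅ ≠ J' ⊆ J} (-1)^{|J'|+1} ∏_{j ∈ J'} x_j`
of a finite family of idempotents of a commutative non-unital ring. -/
noncomputable def rjoin {ι A : Type} [NonUnitalCommRing A] (s : Finset ι) (f : ι → A) : A :=
  ∑ t ∈ s.powerset.filter (fun t => t.Nonempty), ((-1 : ℤ) ^ (t.card + 1)) • nprod t f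

/-- The join `⋁_{j ∈ J} e_j ∈ ℤ[E^×]` of a finite family of elements of `E`:
`∑_{∅ ≠ J' ⊆ J} (-1)^{|J'|+1} ∏_{j ∈ J'} e_j`, where a product whose value in `E`
is `0` contributes `0`. -/
noncomputable def join {ι : Type} (s : Finset ι) (e : ι → E) : ZE E :=
  rjoin s (fun j => elt (e j))

/-- Iterated product of a nonempty list in a semigroup with zero (the value on the
empty list is the junk value `0`). -/
def listProd : List E → E
  | [] => 0
  | [a] => a
  | a :: b :: l => a * listProd (b :: l)

/-- The product `∏_{j ∈ s} f j ∈ E` of a (nonempty) finite family. -/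
noncomputable def eprod {ι : Type} (s : Finset ι) (f : ι → E) : E :=
  listProd (s.toList.map f)

/-- The support `E(x)` of `x ∈ ℤ[E^×]`: the finite set of elements of `E^×` appearing
with a nonzero coefficient in the reduced form of `x`. -/
noncomputable def supp (x : ZE E) : Finset E := x.1.coeff.support

section Action

variable {Γ : Type} [Group Γ] [MulAction Γ E]

/-- The induced action of `g ∈ Γ` on `ℤ[E^×]`: the `ℤ`-linear map sending a basis
element `e ∈ E^×` to `g • e`.  (When the action fixes `0` — which is the case for an
action by semigroup automorphisms fixing `0` — the truncation `T` is a no-op, and this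
is the automorphism of `ℤ[E^×]` induced by `τ_g`.) -/
noncomputable def act (g : Γ) (x : ZE E) : ZE E :=
  ⟨T (MonoidAlgebra.ofCoeff (Finsupp.mapDomain (fun e : E => g • e) x.1.coeff)), T_apply_zero _⟩

end Action



attribute [local instance] Classical.propDecidable

variable {E : Type} [SemilatticeWithZero E]

/-- A Γ-semilattice structure: the group acts by semigroup automorphisms fixing `0`. -/
def IsGammaSL (Γ E : Type) [Group Γ] [SemilatticeWithZero E] [MulAction Γ E] : Prop :=
  (∀ (g : Γ) (x y : E), g • (x * y) = (g • x) * (g • y)) ∧ (∀ g : Γ, g • (0 : E) = 0)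

/-- The set `E_φ`. -/
def Ephi {D : Type} [NonUnitalCommRing D] (φ : ZE E →ₙ+* D) : Set (ZE E) :=
  { x | ∃ (e : E) (J : Finset E), e ≠ 0 ∧ (∀ f ∈ J, f ≠ 0 ∧ f * e = f ∧ f ≠ e) ∧
      x = elt e - join J (fun f => f) ∧
      φ (elt e) = rjoin J (fun f => φ (elt f)) }

/-- `R` is a finite cover for `e ∈ E^×`. -/
def IsCover (e : E) (R : Finset E) : Prop :=
  (∀ f ∈ R, f ≠ 0 ∧ f * e = f) ∧
  ∀ f' : E, f' ≠ 0 → f' * e = f' → ∃ f ∈ R, f' * f ≠ 0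

/-- `ℛ` is a collection of finite covers for `E`. -/
def CovSystem (ℛ : E → Set (Finset E)) : Prop :=
  ∀ e : E, e ≠ 0 → ∀ R ∈ ℛ e, IsCover e R

/-- Condition (i). -/
def CondI (ℛ : E → Set (Finset E)) : Prop :=
  ∀ d e : E, d ≠ 0 → e ≠ 0 → d * e ≠ 0 → ∀ R ∈ ℛ e,
    d * e ∈ (R.image (fun f => d * f)).erase 0 ∨ (R.image (fun f => d * f)).erase 0 ∈ ℛ (d * e)

/-- Condition (ii). -/
def CondII (ℛ : E → Set (Finset E)) : Prop :=
  ∀ e : E, e ≠ 0 → ∀ r : ℕ, 0 < r → ∀ Rs : Fin r → Finset E,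
    Function.Injective Rs → (∀ i, Rs i ∈ ℛ e) → ∀ ε : Fin r → E,
    (∀ i, ε i ∈ supp (join (Rs i) (fun f => f))) → ∀ j : Fin r,
      (if r = 1 then e else eprod (Finset.univ.erase j) ε) ≠ 0 →
      eprod Finset.univ ε * (if r = 1 then e else eprod (Finset.univ.erase j) ε)
          = eprod Finset.univ ε ∧
      eprod Finset.univ ε ≠ (if r = 1 then e else eprod (Finset.univ.erase j) ε)

/-- Condition (iii). -/
def CondIII (Γ : Type) [Group Γ] [MulAction Γ E] (ℛ : E → Set (Finset E)) : Prop :=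
  ∀ (g : Γ) (e : E), e ≠ 0 →
    (fun R : Finset E => R.image (fun f => g • f)) '' (ℛ e) = ℛ (g • e)

/-- `e(𝒮) = ∏_{R ∈ 𝒮} (e - ⋁R) ∈ ℤ[E^×]`. -/
noncomputable def eS (e : E) (S : Finset (Finset E)) : ZE E :=
  nprod S (fun R => elt e - join R (fun f => f))

/-- `E(E,ℛ) = {e(𝒮) : e ∈ E^×, 𝒮 ⊆ ℛ(e) nonempty finite} ∪ {0} ⊆ ℤ[E^×]`. -/
def EER (ℛ : E → Set (Finset E)) : Set (ZE E) :=
  {x | ∃ (e : E) (S : Finset (Finset E)), e ≠ 0 ∧ S.Nonempty ∧ ↑S ⊆ ℛ e ∧ x = eS e S} ∪ {0}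

/-- `R(𝒮,R̃) = {e(𝒮 ∪ {R̃})} ∪ {f ⬝ e(𝒮) : f ∈ R̃, f ⬝ e(𝒮) ≠ 0}`. -/
noncomputable def RSR (e : E) (S : Finset (Finset E)) (Rt : Finset E) : Finset (ZE E) :=
  insert (eS e (insert Rt S)) ((Rt.image (fun f => elt f * eS e S)).erase 0)

/-- The collection of finite covers `ℛ(E,ℛ)` on `E(E,ℛ)`, assigning to an element
`x = e(𝒮)` of `E(E,ℛ)^×` the covers `R(𝒮,R̃)`, `R̃ ∈ ℛ(e) ∖ 𝒮` (over all ways of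
presenting `x` in the form `e(𝒮)`). -/
def RER (ℛ : E → Set (Finset E)) (x : ZE E) : Set (Finset (ZE E)) :=
  {C | ∃ (e : E) (S : Finset (Finset E)) (Rt : Finset E),
        e ≠ 0 ∧ S.Nonempty ∧ ↑S ⊆ ℛ e ∧ Rt ∈ ℛ e ∧ Rt ∉ S ∧ x = eS e S ∧ C = RSR e S Rt}

/-- The `ℤ`-linear map `ℤ[E₁^×] → ℤ[E₂^×]` induced by a map `θ` from `E₁` to `ℤ[E₂^×]`,
sending a basis element `e' ∈ E₁^×` to `θ e'`. -/
noncomputable def indMap {E₁ E₂ : Type} [SemilatticeWithZero E₁] [SemilatticeWithZero E₂]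
    (θ : E₁ → ZE E₂) : ZE E₁ →ₗ[ℤ] ZE E₂ :=
  (Finsupp.linearCombination ℤ θ).comp
    ((MonoidAlgebra.coeffLinearEquiv ℤ).toLinearMap.comp ((ZS E₁).subtype.toIntLinearMap))

/-- `(E₁, ℛ₁, θ)` is a realization of the construction `(E(E,ℛ), ℛ(E,ℛ))`:
`θ` identifies the abstract Γ-semilattice `E₁` with `E(E,ℛ) ⊆ ℤ[E^×]` (equivariantly,
multiplicatively and preserving `0`), and `ℛ₁` corresponds to `ℛ(E,ℛ)` under this
identification. -/
def Realizes {Γ E E₁ : Type} [Group Γ] [SemilatticeWithZero E] [MulAction Γ E]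
    [SemilatticeWithZero E₁] [MulAction Γ E₁]
    (ℛ : E → Set (Finset E)) (ℛ₁ : E₁ → Set (Finset E₁)) (θ : E₁ → ZE E) : Prop :=
  Function.Injective θ ∧ Set.range θ = EER ℛ ∧ θ 0 = 0 ∧
  (∀ x y : E₁, θ (x * y) = θ x * θ y) ∧
  (∀ (g : Γ) (x : E₁), θ (g • x) = act g (θ x)) ∧
  (∀ e' : E₁, e' ≠ 0 → ∀ C : Finset E₁, C ∈ ℛ₁ e' ↔ C.image θ ∈ RER ℛ (θ e'))

end IndRes

/-!
Write `f ≤ e` for `f * e = f`. Condition (ii) with `r = 1` says that every element of the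
support of `⋁R`, `R ∈ ℛ(e)`, lies strictly below `e`. The elements of `ℤ[E^×]` supported
strictly below `e` form a non-unital subring on which `e` acts as the identity, so expanding
`e(𝒮) = ∏_{R ∈ 𝒮} (e - ⋁R)` gives `e(𝒮) = e + y` with `y` supported strictly below `e`.
Hence `e` lies in the support of `e(𝒮)`, and the whole support lies below `e`. If `τ_g` fixes
`e(𝒮)`, it permutes its support, so both `g • e` and `g⁻¹ • e` lie below `e`, forcing
`g • e = e`.
-/

namespace IndRes

variable {E : Type} [SemilatticeWithZero E]

lemma ne_zero_of_mem_supp {x : ZE E} {f : E} (hf : f ∈ supp x) : f ≠ 0 := by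
  rintro rfl
  exact Finsupp.mem_support_iff.mp hf x.2

lemma coeff_T_of_ne_zero (z : MonoidAlgebra ℤ E) {d : E} (hd : d ≠ 0) :
    (T z).coeff d = z.coeff d := by
  rw [T, MonoidAlgebra.coeff_sub, Finsupp.sub_apply, sgl_apply_ne 0 d _ (Ne.symm hd), sub_zero]

lemma val_elt {e : E} (he : e ≠ 0) : (elt e).1 = sgl e 1 :=
  T_eq_self (sgl_apply_ne e 0 1 he)

lemma sgl_mul_sgl (a b : E) (c d : ℤ) : sgl a c * sgl b d = sgl (a * b) (c * d) :=
  MonoidAlgebra.single_mul_single ..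

lemma elt_mul_elt (a b : E) : elt a * elt b = elt (a * b) := by
  apply Subtype.ext
  change T (T (sgl a 1) * T (sgl b 1)) = T (sgl (a * b) 1)
  rw [T_mul_left, T_mul_right, sgl_mul_sgl, one_mul]

lemma exists_mul_eq_of_mem_supp_mul {x y : ZE E} {d : E} (hd : d ∈ supp (x * y)) :
    ∃ a ∈ supp x, ∃ b ∈ supp y, a * b = d := by
  classical
  have hd' : d ∈ (x.1 * y.1).coeff.support := by
    rw [Finsupp.mem_support_iff, ← coeff_T_of_ne_zero _ (ne_zero_of_mem_supp hd)]
    exact Finsupp.mem_support_iff.mp hd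
  exact Finset.mem_mul.mp (MonoidAlgebra.support_coeff_mul_subset x.1 y.1 hd')

lemma elt_mul_of_forall_mem_supp {e : E} (he : e ≠ 0) {x : ZE E}
    (h : ∀ f ∈ supp x, e * f = f) : elt e * x = x := by
  apply Subtype.ext
  change T ((elt e).1 * x.1) = x.1
  rw [val_elt he]
  conv_lhs => rw [← MonoidAlgebra.sum_coeff_single x.1]
  rw [Finsupp.sum, Finset.mul_sum]
  conv_rhs => rw [← T_eq_self x.2, ← MonoidAlgebra.sum_coeff_single x.1]
  congr 1
  refine Finset.sum_congr rfl fun a ha => ?_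
  change sgl e 1 * sgl a _ = sgl a _
  rw [sgl_mul_sgl, one_mul, h a ha]

def strictlyBelow (e : E) : NonUnitalSubring (ZE E) where
  carrier := {x | ∀ f ∈ supp x, f * e = f ∧ f ≠ e}
  zero_mem' := by simp [supp]
  add_mem' := by
    classical
    intro a b ha hb f hf
    rcases Finset.mem_union.mp (Finsupp.support_add hf) with hfa | hfb
    exacts [ha f hfa, hb f hfb]
  neg_mem' := by
    intro a ha f hf
    rw [supp, AddSubgroup.coe_neg, MonoidAlgebra.coeff_neg, Finsupp.support_neg] at hf
    exact ha f hf
  mul_mem' := by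
    intro a b ha _ f hf
    obtain ⟨ε, hε, d, hd, rfl⟩ := exists_mul_eq_of_mem_supp_mul hf
    obtain ⟨hεe, hεne⟩ := ha ε hε
    refine ⟨by rw [mul_assoc, mul_comm d, ← mul_assoc, hεe], fun hεd => hεne ?_⟩
    calc ε = ε * (ε * d) := by rw [hεd, hεe]
      _ = e := by rw [← mul_assoc, SemilatticeWithZero.mul_idem, hεd]

lemma elt_mul_of_mem_strictlyBelow {e : E} (he : e ≠ 0) {y : ZE E}
    (hy : y ∈ strictlyBelow e) : elt e * y = y :=
  elt_mul_of_forall_mem_supp he fun f hf => by rw [mul_comm, (hy f hf).1]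

lemma mem_supp_of_sub_elt_mem_strictlyBelow {e : E} (he : e ≠ 0) {x : ZE E}
    (hx : x - elt e ∈ strictlyBelow e) : e ∈ supp x := by
  have hcoeff : (x - elt e).1.coeff e = x.1.coeff e - 1 := by
    change (x.1 - (elt e).1).coeff e = _
    rw [val_elt he, MonoidAlgebra.coeff_sub, Finsupp.sub_apply, sgl_apply_self]
  have he' : e ∉ supp (x - elt e) := fun h => (hx e h).2 rfl
  rw [supp, Finsupp.notMem_support_iff, hcoeff, sub_eq_zero] at he'
  rw [supp, Finsupp.mem_support_iff, he']
  exact one_ne_zero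

lemma mul_eq_of_sub_elt_mem_strictlyBelow {e : E} (he : e ≠ 0) {x : ZE E}
    (hx : x - elt e ∈ strictlyBelow e) {f : E} (hf : f ∈ supp x) : f * e = f := by
  by_cases hfe : f = e
  · rw [hfe, SemilatticeWithZero.mul_idem]
  refine (hx f ?_).1
  have hcoeff : (x - elt e).1.coeff f = x.1.coeff f := by
    change (x.1 - (elt e).1).coeff f = _
    rw [val_elt he, MonoidAlgebra.coeff_sub, Finsupp.sub_apply, sgl_apply_ne e f 1 (Ne.symm hfe),
      sub_zero]
  rw [supp, Finsupp.mem_support_iff, hcoeff]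
  exact Finsupp.mem_support_iff.mp hf

lemma prod_inr_eq_inr_nprod {ι A : Type} [NonUnitalCommRing A] {s : Finset ι} (hs : s.Nonempty)
    (f : ι → A) :
    ∏ j ∈ s, (Unitization.inr (f j) : Unitization ℤ A) = Unitization.inr (nprod s f) := by
  induction hs using Finset.Nonempty.cons_induction with
  | singleton i => simp [nprod]
  | cons i s hi hs ih =>
    have hcons : nprod (Finset.cons i s hi) f = f i * nprod s f := by
      rw [nprod, Finset.prod_cons, ih, ← Unitization.inr_mul, Unitization.snd_inr]
    rw [Finset.prod_cons, ih, hcons, Unitization.inr_mul]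

lemma nprod_singleton {ι A : Type} [NonUnitalCommRing A] (i : ι) (f : ι → A) :
    nprod {i} f = f i := by
  simp [nprod]

lemma nprod_cons {ι A : Type} [NonUnitalCommRing A] {i : ι} {s : Finset ι} (hi : i ∉ s)
    (hs : s.Nonempty) (f : ι → A) : nprod (Finset.cons i s hi) f = f i * nprod s f := by
  rw [nprod, Finset.prod_cons, prod_inr_eq_inr_nprod hs, ← Unitization.inr_mul,
    Unitization.snd_inr]

lemma eprod_univ_fin_one (f : Fin 1 → E) : eprod Finset.univ f = f 0 := by
  rw [eprod, Finset.univ_unique, Finset.toList_singleton]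
  rfl

lemma join_mem_strictlyBelow {ℛ : E → Set (Finset E)} (h2 : CondII ℛ) {e : E} (he : e ≠ 0)
    {R : Finset E} (hR : R ∈ ℛ e) : join R (fun f => f) ∈ strictlyBelow e := by
  intro ε hε
  have key := h2 e he 1 one_pos (fun _ => R) (fun a b _ => Subsingleton.elim a b) (fun _ => hR)
    (fun _ => ε) (fun _ => hε) 0 (by simp [he])
  rwa [if_pos rfl, eprod_univ_fin_one] at key

lemma eS_sub_elt_mem_strictlyBelow {ℛ : E → Set (Finset E)} (h2 : CondII ℛ) {e : E}
    (he : e ≠ 0) {S : Finset (Finset E)} (hS : S.Nonempty) (hSR : ↑S ⊆ ℛ e) :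
    eS e S - elt e ∈ strictlyBelow e := by
  induction hS using Finset.Nonempty.cons_induction with
  | singleton R =>
    rw [eS, nprod_singleton, sub_sub_cancel_left]
    exact neg_mem (join_mem_strictlyBelow h2 he (hSR (by simp)))
  | cons R S hRS hS ih =>
    have hj := join_mem_strictlyBelow h2 he (hSR (Finset.mem_coe.2 (Finset.mem_cons_self R S)))
    have hy := ih fun t ht => hSR (by simp [ht])
    set j := join R (fun f => f)
    set y := eS e S - elt e
    have hexpand : eS e (Finset.cons R S hRS) - elt e = y - j - j * y := by
      have hee : elt e * elt e = elt e := by rw [elt_mul_elt, SemilatticeWithZero.mul_idem]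
      have hje : j * elt e = j := by rw [mul_comm, elt_mul_of_mem_strictlyBelow he hj]
      rw [eS, nprod_cons hRS hS, ← eS, (add_sub_cancel (elt e) (eS e S)).symm, sub_mul, mul_add, mul_add,
        hee, elt_mul_of_mem_strictlyBelow he hy, hje]
      abel
    rw [hexpand]
    exact sub_mem (sub_mem hy hj) (mul_mem hj hy)

section Action

variable {Γ : Type} [Group Γ] [MulAction Γ E]

lemma coeff_act_smul (hzero : ∀ g : Γ, g • (0 : E) = 0) (g : Γ) (x : ZE E) {f : E}
    (hf : f ≠ 0) : (act g x).1.coeff (g • f) = x.1.coeff f := by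
  have hgf : g • f ≠ 0 := fun h => hf (by rw [← inv_smul_smul g f, h, hzero])
  change (T _).coeff (g • f) = _
  rw [coeff_T_of_ne_zero _ hgf]
  exact Finsupp.mapDomain_apply (MulAction.injective g) x.1.coeff f

lemma smul_mem_supp_iff_of_act_eq (hzero : ∀ g : Γ, g • (0 : E) = 0) {g : Γ} {x : ZE E}
    (hfix : act g x = x) (f : E) : g • f ∈ supp x ↔ f ∈ supp x := by
  rcases eq_or_ne f 0 with rfl | hf
  · rw [hzero]
  · rw [supp, Finsupp.mem_support_iff, Finsupp.mem_support_iff, ← coeff_act_smul hzero g x hf,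
      hfix]

end Action

end IndRes

open IndRes

theorem statement_17_general {E Γ : Type} [SemilatticeWithZero E] [Group Γ] [MulAction Γ E]
    (hact : IsGammaSL Γ E) (ℛ : E → Set (Finset E))
    (h2 : CondII ℛ)
    (g : Γ) (e : E) (he : e ≠ 0) (S : Finset (Finset E)) (hS : S.Nonempty) (hSR : ↑S ⊆ ℛ e)
    (hfix : act g (eS e S) = eS e S) :
    g • e = e := by
  obtain ⟨hmul, hzero⟩ := hact
  have hx := eS_sub_elt_mem_strictlyBelow h2 he hS hSR
  have he_mem := mem_supp_of_sub_elt_mem_strictlyBelow he hx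
  have hge : g • e * e = g • e := mul_eq_of_sub_elt_mem_strictlyBelow he hx
    ((smul_mem_supp_iff_of_act_eq hzero hfix e).2 he_mem)
  have hgie : g⁻¹ • e * e = g⁻¹ • e := mul_eq_of_sub_elt_mem_strictlyBelow he hx
    ((smul_mem_supp_iff_of_act_eq hzero hfix _).1 (by rwa [smul_inv_smul]))
  have heg : e * g • e = e := by
    simpa only [hmul, smul_inv_smul] using congrArg (g • ·) hgie
  rw [← hge, mul_comm, heg]

theorem statement_17 {E Γ : Type} [SemilatticeWithZero E] [Group Γ] [MulAction Γ E]
    (hact : IsGammaSL Γ E) (ℛ : E → Set (Finset E))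
    (hcov : CovSystem ℛ) (h1 : CondI ℛ) (h2 : CondII ℛ) (h3 : CondIII Γ ℛ)
    (g : Γ) (e : E) (he : e ≠ 0) (S : Finset (Finset E)) (hS : S.Nonempty) (hSR : ↑S ⊆ ℛ e)
    (hfix : act g (eS e S) = eS e S) :
    g • e = e :=
  statement_17_general hact ℛ h2 g e he S hS hSR hfix
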